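/- arXiv:1310.2935 — 4 statements merged into one kernel-verified Lean document; each statement's English description precedes it below -/
import Mathlib

section
/- The language of a one-letter alternating automaton from every state is finite if and only if Pre^n(F) = ∅ for some n ≤ 2^|Q|. -/
/-- The language of a one-letter alternating automaton (with `L(q) = {n | q ∈ Pre^n(F)}`)
is finite from every state iff `Pre^n(F) = ∅` for some `n ≤ 2^|Q|`. -/
theorem universal_finiteness_iff_pre_empty (Q : Type) [Fintype Q]
    (Pre : Set Q → Set Q) (hPre : Pre ∅ = ∅) (F : Set Q) :
    (∀ q : Q, {n : ℕ | q ∈ Pre^[n] F}.Finite) ↔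
      ∃ n : ℕ, n ≤ 2 ^ Fintype.card Q ∧ Pre^[n] F = ∅ := by
  classical
  have hiter : ∀ k : ℕ, Pre^[k] (∅ : Set Q) = ∅ := by
    intro k
    induction k with
    | zero => rfl
    | succ k ih => rw [Function.iterate_succ_apply, hPre, ih]
  constructor
  · intro hfin
    by_contra hno
    push_neg at hno
    -- pigeonhole: among 0..2^card, two iterates coincide
    have hcardlt : Fintype.card (Set Q) < Fintype.card (Fin (2 ^ Fintype.card Q + 1)) := by
      simp [Fintype.card_fin]
    obtain ⟨a, b, hab, heq⟩ :=
      Fintype.exists_ne_map_eq_of_card_lt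
        (fun n : Fin (2 ^ Fintype.card Q + 1) => Pre^[(n : ℕ)] F) hcardlt
    -- wlog a < b
    wlog hlt : (a : ℕ) < (b : ℕ) generalizing a b
    · exact this b a hab.symm heq.symm
        (lt_of_le_of_ne (not_lt.mp hlt) (fun h => hab (Fin.ext h.symm)))
    set i : ℕ := (a : ℕ) with hi
    set d : ℕ := (b : ℕ) - i
    have hd : 0 < d := Nat.sub_pos_of_lt hlt
    have hji : i + d = (b : ℕ) := by omega
    have hper : ∀ k : ℕ, Pre^[i + k * d] F = Pre^[i] F := by
      intro k
      induction k with
      | zero => simp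
      | succ k ih =>
        have : i + (k + 1) * d = d + (i + k * d) := by ring
        rw [this, Function.iterate_add_apply, ih, ← Function.iterate_add_apply, Nat.add_comm d i, hji]
        exact heq.symm
    obtain ⟨q, hq⟩ := hno i (by omega)
    have : {n : ℕ | q ∈ Pre^[n] F}.Infinite := by
      apply Set.infinite_of_injective_forall_mem (f := fun k : ℕ => i + k * d)
      · intro x y hxy
        simp only at hxy
        exact Nat.eq_of_mul_eq_mul_right hd (by omega)
      · intro k
        show q ∈ Pre^[i + k * d] F
        rw [hper k]; exact hq
    exact this (hfin q)
  · rintro ⟨n, _, hn⟩ q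
    apply Set.Finite.subset (Set.finite_Iio n)
    intro m hm
    simp only [Set.mem_setOf_eq] at hm
    by_contra hmn
    simp only [Set.mem_Iio, not_lt] at hmn
    have : Pre^[m] F = ∅ := by
      have : m = (m - n) + n := by omega
      rw [this, Function.iterate_add_apply, hn, hiter]
    rw [this] at hm
    exact hm
end

section
/- In a finite Markov decision process, a Dirac initial distribution at state q₀ is sure winning for the eventually synchronizing objective in target set T if and only if q₀ ∈ Pre^n(T) for some n ≥ 0, where Pre(S) = {q : ∃ action a, post(q,a) ⊆ S}. -/
open Finset

structure MDP (Q A : Type) [Fintype Q] [Fintype A] where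
  δ : Q → A → Q → ℝ
  nonneg : ∀ q a q', 0 ≤ δ q a q'
  sum_one : ∀ q a, ∑ q', δ q a q' = 1

structure Strat (Q A : Type) [Fintype A] where
  σ : List Q → A → ℝ
  nonneg : ∀ h a, 0 ≤ σ h a
  sum_one : ∀ h, ∑ a, σ h a = 1

variable {Q A : Type} [Fintype Q] [DecidableEq Q] [Fintype A]

/-- Probability of a path of length `n` (i.e. `n+1` states) from initial
distribution `μ0` under strategy `α`. The history passed to the strategy is
the list of visited states, most recent first. -/
noncomputable def pathProb (M : MDP Q A) (μ0 : Q → ℝ) (α : Strat Q A)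
    {n : ℕ} (π : Fin (n + 1) → Q) : ℝ :=
  μ0 (π 0) *
    ∏ i : Fin n,
      ∑ a,
        α.σ (List.ofFn (fun j : Fin (i.1 + 1) =>
            π ⟨i.1 - j.1, lt_of_le_of_lt (Nat.sub_le i.1 j.1) (Nat.lt_succ_of_lt i.isLt)⟩)) a *
          M.δ (π i.castSucc) a (π i.succ)

/-- Distribution over states after `n` steps. -/
noncomputable def Mdist (M : MDP Q A) (μ0 : Q → ℝ) (α : Strat Q A) (n : ℕ) (q : Q) : ℝ :=
  ∑ π : Fin (n + 1) → Q, if π (Fin.last n) = q then pathProb M μ0 α π else 0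

/-- Probability mass in `T` after `n` steps. -/
noncomputable def Mmass (M : MDP Q A) (μ0 : Q → ℝ) (α : Strat Q A) (n : ℕ) (T : Finset Q) : ℝ :=
  ∑ q ∈ T, Mdist M μ0 α n q

open scoped Classical in
/-- Support of the transition `δ(q,a)`. -/
noncomputable def post (M : MDP Q A) (q : Q) (a : A) : Finset Q :=
  Finset.univ.filter (fun q' => 0 < M.δ q a q')

open scoped Classical in
/-- One-step predecessor operator. -/
noncomputable def PreM (M : MDP Q A) (S : Finset Q) : Finset Q :=
  Finset.univ.filter (fun q => ∃ a, post M q a ⊆ S)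

def IsDist (μ : Q → ℝ) : Prop := (∀ q, 0 ≤ μ q) ∧ ∑ q, μ q = 1

def dirac (q0 : Q) : Q → ℝ := fun q => if q = q0 then (1 : ℝ) else 0

def PureStrat (α : Strat Q A) : Prop := ∀ h, ∃ a, α.σ h a = 1

/-!
Sure winning in `n` steps means that every path of positive probability ends in `T` after `n`
steps. If all such paths of length `k + 1` end in `S`, then all those of length `k` end in
`Pre(S)`: at every history some action has positive probability, and each of its successors
continues the path with positive probability. Iterating from `k = n` down to `0` gives
`q₀ ∈ Preⁿ(T)`. Conversely, if `q₀ ∈ Preⁿ(T)`, the pure strategy that at step `m` plays, from a state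
of `Preⁿ⁻ᵐ(T)`, an action whose support lies in `Preⁿ⁻ᵐ⁻¹(T)` keeps every path on this chain.
-/

lemma mul_pos_iff_of_nonneg {R : Type*} [Semiring R] [PartialOrder R] [IsOrderedRing R]
    [NoZeroDivisors R] {a b : R} (ha : 0 ≤ a) (hb : 0 ≤ b) : 0 < a * b ↔ 0 < a ∧ 0 < b := by
  simp only [ha.lt_iff_ne', hb.lt_iff_ne', (mul_nonneg ha hb).lt_iff_ne', ne_eq, mul_eq_zero,
    not_or]

lemma List.ofFn_sub_eq_reverse_ofFn {β : Type*} {k : ℕ} (f : Fin (k + 1) → β) :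
    List.ofFn (fun j : Fin (k + 1) =>
        f ⟨k - j.1, lt_of_le_of_lt (Nat.sub_le k j.1) (Nat.lt_succ_self k)⟩) =
      (List.ofFn f).reverse := by
  apply List.ext_getElem (by simp)
  intro i _ _
  simp only [List.getElem_ofFn, List.getElem_reverse, List.length_ofFn]
  congr 2

omit [DecidableEq Q] in
def SurelyIn (M : MDP Q A) (μ0 : Q → ℝ) (α : Strat Q A) (n : ℕ) (S : Finset Q) : Prop :=
  ∀ π : Fin (n + 1) → Q, 0 < pathProb M μ0 α π → π (Fin.last n) ∈ S

section PathProb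

omit [DecidableEq Q]

variable (M : MDP Q A) {μ0 : Q → ℝ} (α : Strat Q A)

lemma pathProb_nonneg (hμ : ∀ q, 0 ≤ μ0 q) {n : ℕ} (π : Fin (n + 1) → Q) :
    0 ≤ pathProb M μ0 α π :=
  mul_nonneg (hμ _) (prod_nonneg fun _ _ => sum_nonneg fun _ _ =>
    mul_nonneg (α.nonneg _ _) (M.nonneg _ _ _))

lemma pathProb_fin_one (π : Fin 1 → Q) : pathProb M μ0 α π = μ0 (π 0) := by
  simp [pathProb]

lemma pathProb_snoc {k : ℕ} (π : Fin (k + 1) → Q) (q' : Q) :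
    pathProb M μ0 α (Fin.snoc π q') =
      pathProb M μ0 α π *
        ∑ a, α.σ (List.ofFn π).reverse a * M.δ (π (Fin.last k)) a q' := by
  have snoc_mk : ∀ (v : ℕ) (h₁ : v < k + 2) (h₂ : v < k + 1),
      (Fin.snoc π q' : Fin (k + 2) → Q) ⟨v, h₁⟩ = π ⟨v, h₂⟩ := fun v _ h₂ =>
    Fin.snoc_castSucc (i := ⟨v, h₂⟩) ..
  have snoc_zero : (Fin.snoc π q' : Fin (k + 2) → Q) 0 = π 0 := snoc_mk 0 _ _
  unfold pathProb
  rw [Fin.prod_univ_castSucc, snoc_zero, mul_assoc, ← List.ofFn_sub_eq_reverse_ofFn]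
  congr 2
  · refine prod_congr rfl fun i _ => sum_congr rfl fun a _ => ?_
    rw [Fin.succ_castSucc, Fin.snoc_castSucc, Fin.snoc_castSucc]
    congr 3
    exact funext fun j => snoc_mk _ _ (by omega)
  · refine sum_congr rfl fun a _ => ?_
    rw [Fin.succ_last, Fin.snoc_last, Fin.snoc_castSucc]
    congr 3
    exact funext fun j => snoc_mk _ _ (by omega)

lemma pathProb_snoc_pos_iff (hμ : ∀ q, 0 ≤ μ0 q) {k : ℕ} (π : Fin (k + 1) → Q) (q' : Q) :
    0 < pathProb M μ0 α (Fin.snoc π q') ↔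
      0 < pathProb M μ0 α π ∧
        ∃ a, 0 < α.σ (List.ofFn π).reverse a ∧ 0 < M.δ (π (Fin.last k)) a q' := by
  have hstep : ∀ a, 0 ≤ α.σ (List.ofFn π).reverse a * M.δ (π (Fin.last k)) a q' :=
    fun a => mul_nonneg (α.nonneg _ _) (M.nonneg _ _ _)
  rw [pathProb_snoc, mul_pos_iff_of_nonneg (pathProb_nonneg M α hμ π)
    (sum_nonneg fun a _ => hstep a), sum_pos_iff_of_nonneg fun a _ => hstep a]
  simp only [mem_univ, true_and, mul_pos_iff_of_nonneg (α.nonneg _ _) (M.nonneg _ _ _)]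

lemma sum_pathProb (hμ : ∑ q, μ0 q = 1) (n : ℕ) : ∑ π : Fin (n + 1) → Q, pathProb M μ0 α π = 1 := by
  induction n with
  | zero =>
    rw [← hμ]
    exact Fintype.sum_equiv (Equiv.funUnique (Fin 1) Q) _ _ fun π => pathProb_fin_one M α π
  | succ n ih =>
    rw [← ih, ← (Fin.snocEquiv fun _ => Q).sum_comp, Fintype.sum_prod_type_right]
    refine sum_congr rfl fun π _ => ?_
    change ∑ q', pathProb M μ0 α (Fin.snoc π q') = _
    simp only [pathProb_snoc, ← mul_sum]
    rw [sum_comm]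
    simp only [← mul_sum, M.sum_one, mul_one, α.sum_one]

end PathProb

section SurelyIn

variable (M : MDP Q A) {μ0 : Q → ℝ} {α : Strat Q A}

omit [DecidableEq Q] in
lemma surelyIn_zero_iff {S : Finset Q} : SurelyIn M μ0 α 0 S ↔ ∀ q, 0 < μ0 q → q ∈ S := by
  simp only [SurelyIn, pathProb_fin_one]
  exact ⟨fun h q => h fun _ => q, fun h π => h (π 0)⟩

/-- Some action has positive probability at the current history, and then every successor in its
support extends the path with positive probability. -/
lemma surelyIn_PreM_of_surelyIn_succ (hμ : ∀ q, 0 ≤ μ0 q) {k : ℕ} {S : Finset Q}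
    (h : SurelyIn M μ0 α (k + 1) S) : SurelyIn M μ0 α k (PreM M S) := by
  intro π hπ
  obtain ⟨a, ha⟩ : ∃ a, 0 < α.σ (List.ofFn π).reverse a := by
    by_contra! hzero
    have := α.sum_one (List.ofFn π).reverse
    rw [sum_eq_zero fun a _ => le_antisymm (hzero a) (α.nonneg _ a)] at this
    exact zero_ne_one this
  simp only [PreM, mem_filter, mem_univ, true_and]
  refine ⟨a, fun q' hq' => ?_⟩
  have hpos : 0 < M.δ (π (Fin.last k)) a q' := by simpa [post] using hq'
  simpa using h _ ((pathProb_snoc_pos_iff M α hμ π q').2 ⟨hπ, a, ha, hpos⟩)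

lemma mem_iterate_PreM_of_surelyIn (hμ : ∀ q, 0 ≤ μ0 q) {n : ℕ} {T : Finset Q}
    (h : SurelyIn M μ0 α n T) {q : Q} (hq : 0 < μ0 q) : q ∈ (PreM M)^[n] T := by
  have back : ∀ d ≤ n, SurelyIn M μ0 α (n - d) ((PreM M)^[d] T) := by
    intro d hd
    induction d with
    | zero => simpa using h
    | succ d ih =>
      rw [Function.iterate_succ_apply']
      refine surelyIn_PreM_of_surelyIn_succ M hμ ?_
      rw [show n - (d + 1) + 1 = n - d by omega]
      exact ih (by omega)
  exact (surelyIn_zero_iff M).1 (by simpa using back n le_rfl) q hq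

end SurelyIn

omit [DecidableEq Q] in
open scoped Classical in
noncomputable def Strat.ofFun (f : List Q → A) : Strat Q A where
  σ h a := if a = f h then 1 else 0
  nonneg h a := by split_ifs <;> norm_num
  sum_one h := by simp

omit [Fintype Q] [DecidableEq Q] in
lemma Strat.ofFun_pos_iff {f : List Q → A} {h : List Q} {a : A} :
    0 < (Strat.ofFun f).σ h a ↔ a = f h := by
  simp only [Strat.ofFun]
  split_ifs with ha <;> simp [ha]

section PreStrat

variable (M : MDP Q A) [Nonempty A]

noncomputable def preAction (S : Finset Q) (q : Q) : A :=
  if h : ∃ a, post M q a ⊆ S then h.choose else Classical.arbitrary A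

lemma post_preAction_subset {S : Finset Q} {q : Q} (hq : q ∈ PreM M S) :
    post M q (preAction M S q) ⊆ S := by
  have h : ∃ a, post M q a ⊆ S := by simpa [PreM] using hq
  rw [preAction, dif_pos h]
  exact h.choose_spec

/-- On a history of `m + 1` states, most recent first, move from `Pre^(N-m)(T)` into
`Pre^(N-m-1)(T)`. -/
noncomputable def preStrat (T : Finset Q) (N : ℕ) : Strat Q A :=
  Strat.ofFun fun
    | [] => Classical.arbitrary A
    | q :: rest => preAction M ((PreM M)^[N - (rest.length + 1)] T) q

lemma preStrat_pos_iff (T : Finset Q) (N : ℕ) {m : ℕ} (π : Fin (m + 1) → Q) {a : A} :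
    0 < (preStrat M T N).σ (List.ofFn π).reverse a ↔
      a = preAction M ((PreM M)^[N - (m + 1)] T) (π (Fin.last m)) := by
  rw [preStrat, Strat.ofFun_pos_iff, List.ofFn_succ', List.concat_eq_append, List.reverse_concat]
  simp

variable {T : Finset Q} {N : ℕ} {μ0 : Q → ℝ}

lemma surelyIn_succ_preStrat (hμ : ∀ q, 0 ≤ μ0 q) {m : ℕ} (hm : m < N)
    (h : SurelyIn M μ0 (preStrat M T N) m ((PreM M)^[N - m] T)) :
    SurelyIn M μ0 (preStrat M T N) (m + 1) ((PreM M)^[N - (m + 1)] T) := by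
  intro π hπ
  rw [← Fin.snoc_init_self π] at hπ ⊢
  obtain ⟨hinit, a, ha, hδ⟩ := (pathProb_snoc_pos_iff M _ hμ _ _).1 hπ
  rw [preStrat_pos_iff] at ha
  subst ha
  have hmem := h _ hinit
  rw [show N - m = N - (m + 1) + 1 by omega, Function.iterate_succ_apply'] at hmem
  simpa using post_preAction_subset M hmem (by simpa [post] using hδ)

lemma surelyIn_preStrat (hμ : ∀ q, 0 ≤ μ0 q) (h0 : ∀ q, 0 < μ0 q → q ∈ (PreM M)^[N] T) :
    SurelyIn M μ0 (preStrat M T N) N T := by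
  have forward : ∀ m ≤ N, SurelyIn M μ0 (preStrat M T N) m ((PreM M)^[N - m] T) := by
    intro m hm
    induction m with
    | zero => exact (surelyIn_zero_iff M).2 (by simpa using h0)
    | succ m ih => exact surelyIn_succ_preStrat M hμ hm (ih (by omega))
  simpa using forward N le_rfl

end PreStrat

section Mmass

variable (M : MDP Q A) {μ0 : Q → ℝ} {α : Strat Q A}

lemma Mmass_eq_sum_filter (n : ℕ) (T : Finset Q) :
    Mmass M μ0 α n T = ∑ π with π (Fin.last n) ∈ T, pathProb M μ0 α π := by
  unfold Mmass Mdist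
  rw [sum_comm, sum_filter]
  exact sum_congr rfl fun π _ => sum_ite_eq T (π (Fin.last n)) _

lemma Mmass_eq_one_iff (hμ : IsDist μ0) (n : ℕ) (T : Finset Q) :
    Mmass M μ0 α n T = 1 ↔ SurelyIn M μ0 α n T := by
  have hsplit := sum_filter_add_sum_filter_not univ (fun π : Fin (n + 1) → Q => π (Fin.last n) ∈ T)
    (pathProb M μ0 α)
  rw [sum_pathProb M α hμ.2, ← Mmass_eq_sum_filter] at hsplit
  have hmass : Mmass M μ0 α n T = 1 ↔
      ∑ π with π (Fin.last n) ∉ T, pathProb M μ0 α π = 0 := by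
    constructor <;> intro h <;> linarith
  rw [hmass, sum_eq_zero_iff_of_nonneg fun π _ => pathProb_nonneg M α hμ.1 π]
  simp only [mem_filter, mem_univ, true_and, SurelyIn]
  refine forall_congr' fun π => ?_
  rw [(pathProb_nonneg M α hμ.1 π).lt_iff_ne', not_imp_comm]

end Mmass

lemma isDist_dirac (q0 : Q) : IsDist (dirac q0) :=
  ⟨fun q => by unfold dirac; split_ifs <;> norm_num, by simp [dirac]⟩

omit [Fintype Q] in
lemma dirac_pos_iff {q0 q : Q} : 0 < dirac q0 q ↔ q = q0 := by
  unfold dirac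
  split_ifs with h <;> simp [h]

theorem sure_eventually_iff_pre_general {Q A : Type} [Fintype Q] [DecidableEq Q]
    [Fintype A] [Nonempty A]
    (M : MDP Q A) (q0 : Q) (T : Finset Q) :
    (∃ (α : Strat Q A) (n : ℕ), Mmass M (dirac q0) α n T = 1) ↔
      ∃ n : ℕ, q0 ∈ (PreM M)^[n] T := by
  have hdist := isDist_dirac q0
  constructor
  · rintro ⟨α, n, hmass⟩
    exact ⟨n, mem_iterate_PreM_of_surelyIn M hdist.1 ((Mmass_eq_one_iff M hdist n T).1 hmass)
      (dirac_pos_iff.2 rfl)⟩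
  · rintro ⟨n, hn⟩
    refine ⟨preStrat M T n, n, (Mmass_eq_one_iff M hdist n T).2 ?_⟩
    exact surelyIn_preStrat M hdist.1 fun q hq => dirac_pos_iff.1 hq ▸ hn

/-- A Dirac initial distribution at `q₀` is sure winning for eventually
synchronizing in `T` iff `q₀ ∈ Pre^n(T)` for some `n`. -/
theorem sure_eventually_iff_pre {Q A : Type} [Fintype Q] [DecidableEq Q]
    [Fintype A] [Nonempty Q] [Nonempty A]
    (M : MDP Q A) (q0 : Q) (T : Finset Q) :
    (∃ (α : Strat Q A) (n : ℕ), Mmass M (dirac q0) α n T = 1) ↔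
      ∃ n : ℕ, q0 ∈ (PreM M)^[n] T :=
  sure_eventually_iff_pre_general M q0 T
end

section
/- There exists an MDP and a state q₁ such that the MDP is almost-sure winning for eventually synchronizing in {q₁} from some initial distribution but not sure winning; concretely, in the MDP with states q₀, q₁ where from q₀ every action leads to q₀ or q₁ each with probability 1/2 and q₁ is absorbing, from the Dirac distribution on q₀ one has sup_n M^α_n({q₁}) = 1 for the (unique) strategy but M^α_n({q₁}) = 1 − 2^{−n} < 1 for all n. -/
open Finset

/-- The two-state Markov chain with `P(q₀→q₀) = P(q₀→q₁) = 1/2` and `q₁` absorbing,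
started in the Dirac distribution on `q₀`: the probability of being in `q₁` after
`n` steps is `1 − 2^{−n} < 1` for all `n`, so the chain is almost-sure winning
(`⨆ n, M_n({q₁}) = 1`) but not sure winning for eventually synchronizing in `{q₁}`. -/
theorem almost_sure_not_sure_eventually
    (P : Fin 2 → Fin 2 → ℝ)
    (hP0 : P 0 0 = 1/2) (hP1 : P 0 1 = 1/2)
    (hP2 : P 1 0 = 0) (hP3 : P 1 1 = 1)
    (μ : ℕ → Fin 2 → ℝ)
    (hinit : μ 0 = fun q => if q = 0 then 1 else 0)
    (hstep : ∀ n q, μ (n + 1) q = ∑ p : Fin 2, μ n p * P p q) :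
    (∀ n, μ n 1 = 1 - (1/2 : ℝ) ^ n) ∧
    (∀ n, μ n 1 < 1) ∧
    (⨆ n : ℕ, μ n 1) = 1 := by
  have key : ∀ n, μ n 0 = (1/2 : ℝ) ^ n ∧ μ n 1 = 1 - (1/2 : ℝ) ^ n := by
    intro n
    induction n with
    | zero => simp [hinit]
    | succ n ih =>
      obtain ⟨h0, h1⟩ := ih
      constructor
      · rw [hstep, Fin.sum_univ_two, h0, h1, hP0, hP2]; ring
      · rw [hstep, Fin.sum_univ_two, h0, h1, hP1, hP3]; ring
  have h1 : ∀ n, μ n 1 = 1 - (1/2 : ℝ) ^ n := fun n => (key n).2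
  have hlt : ∀ n, μ n 1 < 1 := by
    intro n
    rw [h1]
    have : (0:ℝ) < (1/2)^n := by positivity
    linarith
  refine ⟨h1, hlt, ?_⟩
  apply le_antisymm
  · exact ciSup_le fun n => (hlt n).le
  · have htend : Filter.Tendsto (fun n => μ n 1) Filter.atTop (nhds 1) := by
      simp only [h1]
      have := tendsto_pow_atTop_nhds_zero_of_lt_one (by norm_num : (0:ℝ) ≤ 1/2)
        (by norm_num : (1/2:ℝ) < 1)
      have := this.const_sub 1
      simpa using this
    have hbdd : BddAbove (Set.range fun n => μ n 1) :=
      ⟨1, by rintro x ⟨n, rfl⟩; exact (hlt n).le⟩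
    exact le_of_tendsto htend (Filter.Eventually.of_forall fun n =>
      le_ciSup hbdd n)
end

section
/- In a finite Markov chain, if a state q₀ is reachable from every recurrent state (i.e., every bottom strongly connected component contains a state from which q₀ is reached in one step or q₀ itself is in every BSCC's closure), and q₀ is reachable within every periodic class of every recurrent class, then the probability of being in q₀ at step n is bounded away from 0 along every subsequence in the long run; consequently the probability of being in any other fixed state q₂ is bounded away from 1 in the limit. -/
open Finset

/-- One-step reachability relation of a Markov chain with matrix `P`. -/
def stepRel {S : Type} (P : S → S → ℝ) (s t : S) : Prop := 0 < P s t

/-- Reachability (reflexive-transitive closure of the positive-probability edges). -/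
def Reaches {S : Type} (P : S → S → ℝ) : S → S → Prop :=
  Relation.ReflTransGen (stepRel P)

/-- A state is recurrent (lies in a bottom strongly connected component) if every
state reachable from it can reach it back. -/
def Recurrent {S : Type} (P : S → S → ℝ) (s : S) : Prop :=
  ∀ t, Reaches P s t → Reaches P t s

/-- Reachability in exactly `n` steps. -/
def ReachN {S : Type} (P : S → S → ℝ) : ℕ → S → S → Prop
  | 0, s, t => s = t
  | n + 1, s, t => ∃ u, 0 < P s u ∧ ReachN P n u t

set_option linter.unusedSectionVars false

namespace MCaux

variable {S : Type} [Fintype S] [DecidableEq S]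

/-- n-step transition matrix. -/
def Q (P : S → S → ℝ) : ℕ → S → S → ℝ
  | 0 => fun s t => if s = t then 1 else 0
  | n + 1 => fun s t => ∑ u, P s u * Q P n u t

lemma Q_nonneg (P : S → S → ℝ) (hP : ∀ s t, 0 ≤ P s t) :
    ∀ n s t, 0 ≤ Q P n s t := by
  intro n
  induction n with
  | zero => intro s t; simp [Q]; positivity
  | succ n ih =>
    intro s t
    exact Finset.sum_nonneg fun u _ => mul_nonneg (hP s u) (ih u t)

lemma Q_succ_right (P : S → S → ℝ) :
    ∀ n s t, Q P (n + 1) s t = ∑ u, Q P n s u * P u t := by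
  intro n
  induction n with
  | zero =>
    intro s t
    simp [Q]
  | succ n ih =>
    intro s t
    calc Q P (n + 2) s t = ∑ u, P s u * Q P (n + 1) u t := rfl
      _ = ∑ u, P s u * ∑ v, Q P n u v * P v t := by simp_rw [ih]
      _ = ∑ u, ∑ v, P s u * (Q P n u v * P v t) := by simp_rw [Finset.mul_sum]
      _ = ∑ v, ∑ u, P s u * Q P n u v * P v t := by
          rw [Finset.sum_comm]; simp_rw [mul_assoc]
      _ = ∑ v, (∑ u, P s u * Q P n u v) * P v t := by simp_rw [Finset.sum_mul]
      _ = ∑ v, Q P (n + 1) s v * P v t := rfl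

lemma Q_add (P : S → S → ℝ) :
    ∀ a b s t, Q P (a + b) s t = ∑ u, Q P a s u * Q P b u t := by
  intro a
  induction a with
  | zero =>
    intro b s t
    simp [Q]
  | succ a ih =>
    intro b s t
    have h1 : a + 1 + b = (a + b) + 1 := by omega
    calc Q P (a + 1 + b) s t = ∑ u, P s u * Q P (a + b) u t := by rw [h1]; rfl
      _ = ∑ u, P s u * ∑ v, Q P a u v * Q P b v t := by simp_rw [ih]
      _ = ∑ u, ∑ v, P s u * (Q P a u v * Q P b v t) := by simp_rw [Finset.mul_sum]
      _ = ∑ v, ∑ u, P s u * Q P a u v * Q P b v t := by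
          rw [Finset.sum_comm]; simp_rw [mul_assoc]
      _ = ∑ v, (∑ u, P s u * Q P a u v) * Q P b v t := by simp_rw [Finset.sum_mul]
      _ = ∑ v, Q P (a + 1) s v * Q P b v t := rfl

lemma Q_row_sum (P : S → S → ℝ) (hrow : ∀ s, ∑ t, P s t = 1) :
    ∀ n s, ∑ t, Q P n s t = 1 := by
  intro n
  induction n with
  | zero => intro s; simp [Q]
  | succ n ih =>
    intro s
    calc ∑ t, Q P (n + 1) s t = ∑ t, ∑ u, P s u * Q P n u t := rfl
      _ = ∑ u, ∑ t, P s u * Q P n u t := Finset.sum_comm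
      _ = ∑ u, P s u * ∑ t, Q P n u t := by simp_rw [Finset.mul_sum]
      _ = 1 := by simp_rw [ih]; simpa using hrow s

lemma mu_eq (P : S → S → ℝ) (μ : ℕ → S → ℝ)
    (hstep : ∀ n t, μ (n + 1) t = ∑ s, μ n s * P s t) :
    ∀ n t, μ n t = ∑ s, μ 0 s * Q P n s t := by
  intro n
  induction n with
  | zero => intro t; simp [Q, mul_ite]
  | succ n ih =>
    intro t
    calc μ (n + 1) t = ∑ s, μ n s * P s t := hstep n t
      _ = ∑ s, (∑ r, μ 0 r * Q P n r s) * P s t := by simp_rw [ih]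
      _ = ∑ s, ∑ r, μ 0 r * Q P n r s * P s t := by simp_rw [Finset.sum_mul]
      _ = ∑ r, ∑ s, μ 0 r * (Q P n r s * P s t) := by
          rw [Finset.sum_comm]; simp_rw [mul_assoc]
      _ = ∑ r, μ 0 r * ∑ s, Q P n r s * P s t := by simp_rw [Finset.mul_sum]
      _ = ∑ r, μ 0 r * Q P (n + 1) r t := by simp_rw [Q_succ_right]

lemma Q_pos_of_reachN (P : S → S → ℝ) (hP : ∀ s t, 0 ≤ P s t) :
    ∀ n s t, ReachN P n s t → 0 < Q P n s t := by
  intro n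
  induction n with
  | zero => intro s t h; cases h; simp [Q]
  | succ n ih =>
    intro s t ⟨u, hu, hr⟩
    have h1 : 0 < P s u * Q P n u t := mul_pos hu (ih u t hr)
    have h2 : P s u * Q P n u t ≤ ∑ v, P s v * Q P n v t :=
      Finset.single_le_sum (f := fun v => P s v * Q P n v t)
        (fun v _ => mul_nonneg (hP s v) (Q_nonneg P hP n v t)) (Finset.mem_univ u)
    exact lt_of_lt_of_le h1 h2

lemma reachN_snoc (P : S → S → ℝ) :
    ∀ n s u t, ReachN P n s u → 0 < P u t → ReachN P (n + 1) s t := by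
  intro n
  induction n with
  | zero => intro s u t h hp; cases h; exact ⟨t, hp, rfl⟩
  | succ n ih =>
    intro s u t ⟨v, hv, hr⟩ hp
    exact ⟨v, hv, ih v u t hr hp⟩

lemma reaches_reachN (P : S → S → ℝ) {s t : S} (h : Reaches P s t) :
    ∃ n, ReachN P n s t := by
  induction h with
  | refl => exact ⟨0, rfl⟩
  | tail _ hstep ih =>
    obtain ⟨n, hn⟩ := ih
    exact ⟨n + 1, reachN_snoc P n _ _ _ hn hstep⟩

lemma recurrent_closed (P : S → S → ℝ) {s t : S} (hs : Recurrent P s)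
    (hst : Reaches P s t) : Recurrent P t := by
  intro u htu
  have hsu : Reaches P s u := hst.trans htu
  have hus : Reaches P u s := hs u hsu
  exact hus.trans hst

lemma exists_recurrent (P : S → S → ℝ) :
    ∀ s : S, ∃ r, Reaches P s r ∧ Recurrent P r := by
  classical
  have key : ∀ n (s : S), (univ.filter (fun t => Reaches P s t)).card ≤ n →
      ∃ r, Reaches P s r ∧ Recurrent P r := by
    intro n
    induction n with
    | zero =>
      intro s hs
      exfalso
      have : s ∈ univ.filter (fun t => Reaches P s t) := by
        exact Finset.mem_filter.mpr ⟨Finset.mem_univ s, Relation.ReflTransGen.refl⟩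
      have := Finset.card_pos.mpr ⟨s, this⟩
      omega
    | succ n ih =>
      intro s hs
      by_cases h : Recurrent P s
      · exact ⟨s, Relation.ReflTransGen.refl, h⟩
      · rw [Recurrent] at h
        push_neg at h
        obtain ⟨t, hst, hts⟩ := h
        have hsub : univ.filter (fun v => Reaches P t v) ⊆
            univ.filter (fun v => Reaches P s v) := by
          intro v hv
          simp only [Finset.mem_filter, Finset.mem_univ, true_and] at hv ⊢
          exact hst.trans hv
        have hsmem : s ∈ univ.filter (fun v => Reaches P s v) := by
          exact Finset.mem_filter.mpr ⟨Finset.mem_univ s, Relation.ReflTransGen.refl⟩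
        have hsnot : s ∉ univ.filter (fun v => Reaches P t v) := by
          simp only [Finset.mem_filter, Finset.mem_univ, true_and]
          exact hts
        have hlt : (univ.filter (fun v => Reaches P t v)).card <
            (univ.filter (fun v => Reaches P s v)).card :=
          Finset.card_lt_card ⟨hsub, fun hc => hsnot (hc hsmem)⟩
        obtain ⟨r, hr1, hr2⟩ := ih t (by omega)
        exact ⟨r, hst.trans hr1, hr2⟩
  intro s
  exact key _ s le_rfl

end MCaux

/-- In a finite Markov chain, if `q₀` belongs to every bottom strongly connected
component (every recurrent state reaches `q₀` and vice versa, with a one-step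
entry into `q₀`), and `q₀` is reachable from every recurrent state in every
sufficiently large number of steps (reachability within every periodic class),
then the probability of being in `q₀` at step `n` is eventually bounded away
from `0`; consequently, for any other state `q₂`, the probability of being in
`q₂` is eventually bounded away from `1`. -/
theorem recurrent_state_mass_bounded_away
    {S : Type} [Fintype S] [DecidableEq S]
    (P : S → S → ℝ) (hP : ∀ s t, 0 ≤ P s t) (hrow : ∀ s, ∑ t, P s t = 1)
    (μ : ℕ → S → ℝ) (hμ0 : (∀ s, 0 ≤ μ 0 s) ∧ ∑ s, μ 0 s = 1)
    (hstep : ∀ n t, μ (n + 1) t = ∑ s, μ n s * P s t)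
    (q0 : S)
    (hbscc : ∀ s, Recurrent P s →
        Reaches P s q0 ∧ Reaches P q0 s ∧ ∃ u, Reaches P s u ∧ 0 < P u q0)
    (hperiodic : ∃ N : ℕ, ∀ s, Recurrent P s → ∀ n, N ≤ n → ReachN P n s q0) :
    ∃ c : ℝ, 0 < c ∧ ∃ N : ℕ,
      (∀ n, N ≤ n → c ≤ μ n q0) ∧
      (∀ q2, q2 ≠ q0 → ∀ n, N ≤ n → μ n q2 ≤ 1 - c) := by
  classical
  obtain ⟨N0, hN0⟩ := hperiodic
  -- basic properties of μ
  have hμnonneg : ∀ n s, 0 ≤ μ n s := by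
    intro n
    induction n with
    | zero => exact hμ0.1
    | succ n ih =>
      intro s
      rw [hstep]
      exact Finset.sum_nonneg fun u _ => mul_nonneg (ih u) (hP u s)
  have hμsum : ∀ n, ∑ s, μ n s = 1 := by
    intro n
    induction n with
    | zero => exact hμ0.2
    | succ n ih =>
      calc ∑ t, μ (n + 1) t = ∑ t, ∑ s, μ n s * P s t := by simp_rw [hstep]
        _ = ∑ s, ∑ t, μ n s * P s t := Finset.sum_comm
        _ = ∑ s, μ n s * ∑ t, P s t := by simp_rw [Finset.mul_sum]
        _ = 1 := by simp_rw [hrow, mul_one, ih]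
  have hSne : Nonempty S := by
    by_contra h
    rw [not_nonempty_iff] at h
    have := hμ0.2
    simp [Finset.univ_eq_empty] at this
  -- recurrent states
  set R : Finset S := Finset.univ.filter (Recurrent P) with hRdef
  have hRmem : ∀ r, r ∈ R ↔ Recurrent P r := by
    intro r; simp [hRdef]
  have hRne : R.Nonempty := by
    obtain ⟨r, _, hrec⟩ := MCaux.exists_recurrent P (Classical.arbitrary S)
    exact ⟨r, (hRmem r).mpr hrec⟩
  -- rows of recurrent states concentrate on R
  have hrowR : ∀ u, Recurrent P u → ∑ r ∈ R, P u r = 1 := by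
    intro u hu
    rw [Finset.sum_subset (Finset.subset_univ R)]
    · exact hrow u
    · intro r _ hrR
      by_contra hne
      have hpos : 0 < P u r := lt_of_le_of_ne (hP u r) (Ne.symm hne)
      exact hrR ((hRmem r).mpr
        (MCaux.recurrent_closed P hu (Relation.ReflTransGen.single hpos)))
  -- mass on recurrent states
  set M : ℕ → S → ℝ := fun m s => ∑ r ∈ R, MCaux.Q P m s r with hMdef
  have hMnonneg : ∀ m s, 0 ≤ M m s := fun m s =>
    Finset.sum_nonneg fun r _ => MCaux.Q_nonneg P hP m s r
  have hMmono_step : ∀ m s, M m s ≤ M (m + 1) s := by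
    intro m s
    have h1 : M (m + 1) s = ∑ u, MCaux.Q P m s u * ∑ r ∈ R, P u r := by
      simp only [hMdef, MCaux.Q_succ_right]
      rw [Finset.sum_comm]
      simp_rw [Finset.mul_sum]
    have h2 : M m s = ∑ u ∈ R, MCaux.Q P m s u * ∑ r ∈ R, P u r := by
      apply Finset.sum_congr rfl
      intro u hu
      rw [hrowR u ((hRmem u).mp hu), mul_one]
    rw [h1, h2]
    apply Finset.sum_le_sum_of_subset_of_nonneg (Finset.subset_univ R)
    intro u _ _
    exact mul_nonneg (MCaux.Q_nonneg P hP m s u)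
      (Finset.sum_nonneg fun r _ => hP u r)
  have hMmono : ∀ m m', m ≤ m' → ∀ s, M m s ≤ M m' s := by
    intro m m' h
    induction h with
    | refl => intro s; exact le_rfl
    | step _ ih =>
      intro s
      exact le_trans (ih s) (hMmono_step _ s)
  have hMpos0 : ∀ s, ∃ k, 0 < M k s := by
    intro s
    obtain ⟨r, hreach, hrec⟩ := MCaux.exists_recurrent P s
    obtain ⟨k, hk⟩ := MCaux.reaches_reachN P hreach
    refine ⟨k, lt_of_lt_of_le (MCaux.Q_pos_of_reachN P hP k s r hk) ?_⟩
    exact Finset.single_le_sum (fun u _ => MCaux.Q_nonneg P hP k s u)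
      ((hRmem r).mpr hrec)
  choose k hk using hMpos0
  set K := Finset.univ.sup k with hKdef
  have hMK : ∀ s, 0 < M K s := fun s =>
    lt_of_lt_of_le (hk s) (hMmono (k s) K (Finset.le_sup (Finset.mem_univ s)) s)
  have hune : (Finset.univ : Finset S).Nonempty := Finset.univ_nonempty
  set ε := Finset.univ.inf' hune (fun s => M K s) with hεdef
  have hεpos : 0 < ε := (Finset.lt_inf'_iff hune).mpr fun s _ => hMK s
  have hεle : ∀ s, ε ≤ M K s := fun s => Finset.inf'_le _ (Finset.mem_univ s)
  -- entry probabilities from recurrent states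
  have hQN0 : ∀ r ∈ R, 0 < MCaux.Q P N0 r q0 := fun r hr =>
    MCaux.Q_pos_of_reachN P hP N0 r q0 (hN0 r ((hRmem r).mp hr) N0 le_rfl)
  set δ := R.inf' hRne (fun r => MCaux.Q P N0 r q0) with hδdef
  have hδpos : 0 < δ := (Finset.lt_inf'_iff hRne).mpr hQN0
  have hδle : ∀ r ∈ R, δ ≤ MCaux.Q P N0 r q0 := fun r hr => Finset.inf'_le _ hr
  set c := δ * ε with hcdef
  have hc : 0 < c := mul_pos hδpos hεpos
  have hkey : ∀ (s : S) (n : ℕ), N0 + K ≤ n → c ≤ MCaux.Q P n s q0 := by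
    intro s n hn
    obtain ⟨m, rfl⟩ : ∃ m, n = m + N0 := ⟨n - N0, by omega⟩
    have hmK : K ≤ m := by omega
    rw [MCaux.Q_add]
    have step1 : ∑ u ∈ R, MCaux.Q P m s u * MCaux.Q P N0 u q0 ≤
        ∑ u, MCaux.Q P m s u * MCaux.Q P N0 u q0 := by
      apply Finset.sum_le_sum_of_subset_of_nonneg (Finset.subset_univ R)
      intro u _ _
      exact mul_nonneg (MCaux.Q_nonneg P hP m s u) (MCaux.Q_nonneg P hP N0 u q0)
    have step2 : δ * M m s ≤ ∑ u ∈ R, MCaux.Q P m s u * MCaux.Q P N0 u q0 := by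
      rw [hMdef]
      simp only []
      rw [Finset.mul_sum]
      apply Finset.sum_le_sum
      intro u hu
      rw [mul_comm]
      exact mul_le_mul_of_nonneg_left (hδle u hu) (MCaux.Q_nonneg P hP m s u)
    have step3 : c ≤ δ * M m s := by
      rw [hcdef]
      exact mul_le_mul_of_nonneg_left
        (le_trans (hεle s) (hMmono K m hmK s)) hδpos.le
    linarith
  have hfirst : ∀ n, N0 + K ≤ n → c ≤ μ n q0 := by
    intro n hn
    rw [MCaux.mu_eq P μ hstep]
    calc c = (∑ s, μ 0 s) * c := by rw [hμ0.2, one_mul]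
      _ = ∑ s, μ 0 s * c := by rw [Finset.sum_mul]
      _ ≤ ∑ s, μ 0 s * MCaux.Q P n s q0 :=
        Finset.sum_le_sum fun s _ =>
          mul_le_mul_of_nonneg_left (hkey s n hn) (hμ0.1 s)
  refine ⟨c, hc, N0 + K, hfirst, ?_⟩
  intro q2 hq2 n hn
  have h0 : c ≤ μ n q0 := hfirst n hn
  have hpair : μ n q2 + μ n q0 ≤ 1 := by
    rw [← hμsum n]
    have heq : μ n q2 + μ n q0 = ∑ x ∈ ({q2, q0} : Finset S), μ n x :=
      (Finset.sum_pair hq2).symm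
    rw [heq]
    exact Finset.sum_le_sum_of_subset_of_nonneg (Finset.subset_univ _)
      fun x _ _ => hμnonneg n x
  linarith
end
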